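/- Let n ≥ 3, let λ, ν ∈ ℂ with ν − λ a nonnegative integer, and let 1 ≤ p, q ≤ n−1 with p ≠ q. Then (x_p x_q)·𝒦_{λ−1,ν+1} = 4 ∂_p ∂_q 𝒦_{λ+1,ν−1} as tempered distributions on ℝ^n. -/

import Mathlib

/-- Partial derivative ∂_p of a complex-valued function on ℝ^n. -/
noncomputable def pd {n : ℕ} (p : Fin n) (f : (Fin n → ℝ) → ℂ) : (Fin n → ℝ) → ℂ :=
  fun x => fderiv ℝ f x (Pi.single p 1)

/-- Δ' = ∂_1² + ⋯ + ∂_{n−1}², the Laplacian in the first n−1 variables on ℝ^n. -/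
noncomputable def lapP {n : ℕ} (f : (Fin n → ℝ) → ℂ) : (Fin n → ℝ) → ℂ :=
  fun x => ∑ j ∈ Finset.univ.filter (fun j : Fin n => (j : ℕ) < n - 1), pd j (pd j f) x

/-- ∂_n, the partial derivative in the last variable on ℝ^n. -/
noncomputable def pdLast {n : ℕ} (f : (Fin n → ℝ) → ℂ) : (Fin n → ℝ) → ℂ :=
  if h : 0 < n then pd ⟨n - 1, by omega⟩ f else 0

/-- The coefficient of z^{l−2k} in the renormalized Gegenbauer polynomial
C̃_l^α(z) = Σ_{k=0}^{⌊l/2⌋} (−1)^k (∏_{m=⌊(l+1)/2⌋}^{l−k−1}(α+m)) (2z)^{l−2k}/(k!(l−2k)!). -/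
noncomputable def gegenCoeff (α : ℂ) (l k : ℕ) : ℂ :=
  (-1 : ℂ) ^ k * (∏ m ∈ Finset.Ico ((l + 1) / 2) (l - k), (α + (m : ℂ))) *
    2 ^ (l - 2 * k) / ((Nat.factorial k : ℂ) * (Nat.factorial (l - 2 * k) : ℂ))

/-- The action on a test function `φ` of the tempered distribution
`𝒦_{λ,ν} = Σ_{k=0}^{⌊l/2⌋} a_k (−1)^k (Δ')^k ∂_n^{l−2k} δ` on ℝ^n, where `l = ν − λ`
and `a_k` are the coefficients of `C̃_l^{λ−(n−1)/2}`; each `∂` contributes a sign `−1`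
and δ evaluates at 0.  By convention `𝒦_{λ,ν} = 0` when `l < 0`. -/
noncomputable def Kact (n : ℕ) (lam : ℂ) (l : ℤ) (φ : (Fin n → ℝ) → ℂ) : ℂ :=
  if 0 ≤ l then
    ∑ k ∈ Finset.range (l.toNat / 2 + 1),
      gegenCoeff (lam - ((n : ℂ) - 1) / 2) l.toNat k *
        ((-1 : ℂ) ^ k * ((-1 : ℂ) ^ (l.toNat - 2 * k) *
          (pdLast (n := n))^[l.toNat - 2 * k] ((lapP (n := n))^[k] φ) 0))
  else 0

/-- γ(μ, a) := 1 if a is odd, μ + a/2 if a is even. -/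
noncomputable def gam (mu : ℂ) (a : ℕ) : ℂ := if a % 2 = 1 then 1 else mu + ((a / 2 : ℕ) : ℂ)

open scoped ContDiff

/-! On the ℂ-module of smooth functions, multiplication by `x_i` and `∂_j` are endomorphisms with
`[∂_j, x_i] = δ_ij`, so the computation is ring arithmetic in `Module.End`: `[Δ', x_i] = 2 ∂_i` for
`i < n - 1`, hence `Δ'^k x_i = x_i Δ'^k + 2k ∂_i Δ'^(k-1)`. As `x_p`, `x_q` commute with `∂_n` and
vanish at the origin, `∂_n^a Δ'^k (x_p x_q f)(0) = 4k(k-1) ∂_n^a Δ'^(k-2) ∂_q ∂_p f(0)`. In the sum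
defining `𝒦_{λ-1,ν+1}` this shifts the summation index by two, and with `α = λ - (n-1)/2` the
Gegenbauer coefficients satisfy `(j+2)(j+1) a_{j+2}(α-1, l+2) = a_j(α+1, l-2)`, so the shifted sum
is four times the one defining `𝒦_{λ+1,ν-1}`. -/

theorem pow_mul_eq_mul_pow_add_nsmul {R : Type*} [Semiring R] {a b c : R} (hac : Commute a c)
    (h : a * b = b * a + c) (k : ℕ) : a ^ k * b = b * a ^ k + k • (c * a ^ (k - 1)) := by
  induction k with
  | zero => simp
  | succ m ih =>
    have hm : m • (c * a ^ (m - 1)) * a = m • (c * a ^ m) := by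
      rcases m with _ | m
      · simp
      · simp [mul_assoc, pow_succ]
    calc a ^ (m + 1) * b = (a ^ m * b) * a + a ^ m * c := by
          rw [pow_succ, mul_assoc, h, mul_add, ← mul_assoc]
      _ = b * a ^ (m + 1) + (m + 1) • (c * a ^ m) := by
          rw [ih, (hac.pow_left m).eq, add_mul, hm, mul_assoc, ← pow_succ, add_smul, one_smul,
            add_assoc]

theorem fderiv_fderiv_apply_eq {𝕜 E F : Type*} [NontriviallyNormedField 𝕜]
    [NormedAddCommGroup E] [NormedSpace 𝕜 E] [NormedAddCommGroup F] [NormedSpace 𝕜 F]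
    {f : E → F} {x : E} (hf : DifferentiableAt 𝕜 (fderiv 𝕜 f) x) (v w : E) :
    fderiv 𝕜 (fun y => fderiv 𝕜 f y v) x w = fderiv 𝕜 (fderiv 𝕜 f) x w v := by
  simp [fderiv_clm_apply hf (differentiableAt_const v)]

noncomputable section

variable {n : ℕ}

def smoothFun (n : ℕ) : Submodule ℂ ((Fin n → ℝ) → ℂ) where
  carrier := {f | ContDiff ℝ ∞ f}
  add_mem' {_ _} (hf : ContDiff ℝ ∞ _) (hg : ContDiff ℝ ∞ _) := hf.add hg
  zero_mem' := show ContDiff ℝ ∞ (0 : (Fin n → ℝ) → ℂ) from contDiff_zero_fun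
  smul_mem' c _ (hf : ContDiff ℝ ∞ _) := hf.const_smul c

theorem contDiff_coe_smoothFun (f : smoothFun n) : ContDiff ℝ ∞ (f : (Fin n → ℝ) → ℂ) := f.2

theorem contDiff_pd (j : Fin n) {f : (Fin n → ℝ) → ℂ} (hf : ContDiff ℝ ∞ f) :
    ContDiff ℝ ∞ (pd j f) :=
  (hf.fderiv_right le_rfl).clm_apply contDiff_const

theorem contDiff_ofReal_apply (i : Fin n) : ContDiff ℝ ∞ fun x : Fin n → ℝ => (x i : ℂ) :=
  Complex.ofRealCLM.contDiff.comp (contDiff_apply ℝ ℝ i)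

def pdₗ (j : Fin n) : Module.End ℂ (smoothFun n) where
  toFun f := ⟨pd j f, contDiff_pd j f.2⟩
  map_add' f g := by
    ext x
    have hf := (contDiff_coe_smoothFun f).differentiable (by simp) x
    have hg := (contDiff_coe_smoothFun g).differentiable (by simp) x
    exact congr($(fderiv_add hf hg) (Pi.single j 1))
  map_smul' c f := by
    ext x
    have hf := (contDiff_coe_smoothFun f).differentiable (by simp) x
    exact congr($(fderiv_const_smul hf c) (Pi.single j 1))

def coordMulₗ (i : Fin n) : Module.End ℂ (smoothFun n) where
  toFun f := ⟨fun x => (x i : ℂ) * (f : (Fin n → ℝ) → ℂ) x, (contDiff_ofReal_apply i).mul f.2⟩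
  map_add' f g := by ext x; simp [mul_add]
  map_smul' c f := by ext x; simp [mul_left_comm]

def evalZero : smoothFun n →ₗ[ℂ] ℂ := LinearMap.proj 0 ∘ₗ (smoothFun n).subtype

def lapPₗ : Module.End ℂ (smoothFun n) :=
  ∑ j ∈ Finset.univ.filter (fun j : Fin n => (j : ℕ) < n - 1), pdₗ j * pdₗ j

def pdLastₗ : Module.End ℂ (smoothFun n) :=
  if h : 0 < n then pdₗ ⟨n - 1, by omega⟩ else 0

@[simp] theorem coe_pdₗ (j : Fin n) (f : smoothFun n) : (pdₗ j f : (Fin n → ℝ) → ℂ) = pd j f := rfl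

@[simp] theorem coe_coordMulₗ (i : Fin n) (f : smoothFun n) :
    (coordMulₗ i f : (Fin n → ℝ) → ℂ) = fun x => (x i : ℂ) * (f : (Fin n → ℝ) → ℂ) x := rfl

@[simp] theorem evalZero_apply (f : smoothFun n) : evalZero f = (f : (Fin n → ℝ) → ℂ) 0 := rfl

theorem coe_lapPₗ (f : smoothFun n) : (lapPₗ f : (Fin n → ℝ) → ℂ) = lapP f := by
  ext x
  simp [lapPₗ, lapP, Finset.sum_apply]

theorem coe_pdLastₗ (f : smoothFun n) : (pdLastₗ f : (Fin n → ℝ) → ℂ) = pdLast f := by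
  unfold pdLastₗ pdLast
  split_ifs <;> rfl

theorem commute_pdₗ (i j : Fin n) : Commute (pdₗ i) (pdₗ j) := by
  ext f x
  have hf := contDiff_coe_smoothFun f
  have hdf : DifferentiableAt ℝ (fderiv ℝ (f : (Fin n → ℝ) → ℂ)) x :=
    (hf.fderiv_right (m := ∞) le_rfl).differentiable (by simp) x
  have hsymm : IsSymmSndFDerivAt ℝ (f : (Fin n → ℝ) → ℂ) x :=
    hf.contDiffAt.isSymmSndFDerivAt <| by
      simp only [minSmoothness_of_isRCLikeNormedField]
      exact WithTop.coe_le_coe.mpr le_top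
  simp only [Module.End.mul_apply, coe_pdₗ]
  unfold pd
  rw [fderiv_fderiv_apply_eq hdf, fderiv_fderiv_apply_eq hdf]
  exact hsymm _ _

theorem pdₗ_mul_coordMulₗ (i j : Fin n) :
    pdₗ j * coordMulₗ i = coordMulₗ i * pdₗ j + if i = j then 1 else 0 := by
  ext f x
  have hf := (contDiff_coe_smoothFun f).differentiable (by simp) x
  have hc := (contDiff_ofReal_apply i).differentiable (by simp) x
  have hfc : fderiv ℝ (fun y : Fin n → ℝ => (y i : ℂ)) x = Complex.ofRealCLM.comp (.proj i) :=
    (Complex.ofRealCLM.comp (.proj i) : (Fin n → ℝ) →L[ℝ] ℂ).fderiv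
  simp only [Module.End.mul_apply, LinearMap.add_apply, coe_pdₗ, coe_coordMulₗ, pd,
    Submodule.coe_add, Pi.add_apply, fderiv_fun_mul hc hf, hfc]
  split_ifs with h <;> simp [h, add_comm]

theorem commute_pdₗ_coordMulₗ {i j : Fin n} (h : i ≠ j) : Commute (pdₗ j) (coordMulₗ i) := by
  simp [Commute, SemiconjBy, pdₗ_mul_coordMulₗ, h]

theorem commute_lapPₗ_pdₗ (i : Fin n) : Commute lapPₗ (pdₗ i) :=
  Commute.sum_left _ _ _ fun j _ => ((commute_pdₗ i j).symm.mul_left (commute_pdₗ i j).symm)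

theorem lapPₗ_mul_coordMulₗ {i : Fin n} (hi : (i : ℕ) < n - 1) :
    lapPₗ * coordMulₗ i = coordMulₗ i * lapPₗ + 2 • pdₗ i := by
  have hj : ∀ j, pdₗ j * pdₗ j * coordMulₗ i
      = coordMulₗ i * (pdₗ j * pdₗ j) + if i = j then 2 • pdₗ j else 0 := by
    intro j
    rw [mul_assoc, pdₗ_mul_coordMulₗ, mul_add, ← mul_assoc, pdₗ_mul_coordMulₗ]
    split_ifs with h
    · subst h; noncomm_ring
    · simp [mul_assoc]
  simp only [lapPₗ, Finset.sum_mul, hj, Finset.sum_add_distrib, Finset.mul_sum,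
    Finset.sum_ite_eq, Finset.mem_filter, Finset.mem_univ, true_and, hi, if_true]

theorem evalZero_apply_coordMulₗ {i : Fin n} {A : Module.End ℂ (smoothFun n)}
    (hA : Commute A (coordMulₗ i)) (f : smoothFun n) : evalZero (A (coordMulₗ i f)) = 0 := by
  rw [← Module.End.mul_apply, hA.eq]
  simp

theorem evalZero_lapPₗ_pow_coordMulₗ_coordMulₗ {p q : Fin n} (hp : (p : ℕ) < n - 1)
    (hq : (q : ℕ) < n - 1) (hpq : p ≠ q) {A : Module.End ℂ (smoothFun n)}
    (hAp : Commute A (coordMulₗ p)) (hAq : Commute A (coordMulₗ q)) (k : ℕ) (f : smoothFun n) :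
    evalZero ((A * lapPₗ ^ k : Module.End ℂ (smoothFun n)) (coordMulₗ p (coordMulₗ q f)))
      = (4 * k * (k - 1 : ℕ) : ℂ) *
          evalZero ((A * lapPₗ ^ (k - 2) : Module.End ℂ (smoothFun n)) (pdₗ q (pdₗ p f))) := by
  simp only [← Module.End.mul_apply, ← mul_assoc]
  have hLp := pow_mul_eq_mul_pow_add_nsmul ((commute_lapPₗ_pdₗ p).smul_right 2)
    (lapPₗ_mul_coordMulₗ hp) k
  have hLq := pow_mul_eq_mul_pow_add_nsmul ((commute_lapPₗ_pdₗ q).smul_right 2)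
    (lapPₗ_mul_coordMulₗ hq) (k - 1)
  have hDL : A * pdₗ p * pdₗ q * lapPₗ ^ (k - 1 - 1) = A * lapPₗ ^ (k - 2) * pdₗ q * pdₗ p := by
    simp only [mul_assoc A]
    rw [(commute_pdₗ p q).eq, mul_assoc (lapPₗ ^ _),
      ((commute_lapPₗ_pdₗ q).mul_right (commute_lapPₗ_pdₗ p)).pow_left _ |>.eq, Nat.sub_sub]
  have hsplit : A * lapPₗ ^ k * coordMulₗ p * coordMulₗ q
      = A * coordMulₗ p * (lapPₗ ^ k * coordMulₗ q)
        + k • 2 • (A * pdₗ p * coordMulₗ q * lapPₗ ^ (k - 1))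
        + k • 2 • (k - 1) • 2 • (A * pdₗ p * pdₗ q * lapPₗ ^ (k - 1 - 1)) := by
    calc A * lapPₗ ^ k * coordMulₗ p * coordMulₗ q
        = A * (lapPₗ ^ k * coordMulₗ p) * coordMulₗ q := by noncomm_ring
      _ = A * coordMulₗ p * (lapPₗ ^ k * coordMulₗ q)
            + k • 2 • (A * pdₗ p * (lapPₗ ^ (k - 1) * coordMulₗ q)) := by rw [hLp]; noncomm_ring
      _ = _ := by rw [hLq]; noncomm_ring; rw [smul_add]
  -- the first two summands vanish at `0` once `x_p`, resp. `x_q`, is commuted to the front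
  have hAXq : Commute (A * pdₗ p) (coordMulₗ q) := hAq.mul_left (commute_pdₗ_coordMulₗ hpq.symm)
  rw [hsplit, hDL]
  simp only [LinearMap.add_apply, LinearMap.smul_apply, map_add, map_nsmul, Module.End.mul_apply]
  rw [evalZero_apply_coordMulₗ hAp, ← Module.End.mul_apply A, evalZero_apply_coordMulₗ hAXq]
  simp only [smul_zero, zero_add, nsmul_eq_mul]
  push_cast
  ring

theorem commute_pdLastₗ_coordMulₗ {i : Fin n} (hi : (i : ℕ) < n - 1) :
    Commute pdLastₗ (coordMulₗ i) := by
  unfold pdLastₗ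
  split_ifs
  · exact commute_pdₗ_coordMulₗ (Fin.ne_of_val_ne (by simp; omega))
  · exact Commute.zero_left _

theorem iterate_pdLast_iterate_lapP_apply_zero (a k : ℕ) (f : smoothFun n) :
    pdLast^[a] (lapP^[k] (f : (Fin n → ℝ) → ℂ)) 0
      = evalZero ((pdLastₗ ^ a * lapPₗ ^ k : Module.End ℂ (smoothFun n)) f) := by
  rw [Module.End.mul_apply, Module.End.pow_apply, Module.End.pow_apply, evalZero_apply,
    (Function.Semiconj.iterate_right coe_pdLastₗ a).eq,
    (Function.Semiconj.iterate_right coe_lapPₗ k).eq]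

def kactTerm (α : ℂ) (l k : ℕ) (f : smoothFun n) : ℂ :=
  gegenCoeff α l k * ((-1) ^ k * ((-1) ^ (l - 2 * k) *
    evalZero ((pdLastₗ ^ (l - 2 * k) * lapPₗ ^ k : Module.End ℂ (smoothFun n)) f)))

theorem Kact_natCast (lam : ℂ) (l : ℕ) (f : smoothFun n) :
    Kact n lam l f = ∑ k ∈ Finset.range (l / 2 + 1), kactTerm (lam - ((n : ℂ) - 1) / 2) l k f := by
  simp [Kact, kactTerm, iterate_pdLast_iterate_lapP_apply_zero]

theorem Kact_natCast_sub_two (lam : ℂ) (l : ℕ) (f : smoothFun n) :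
    Kact n lam (l - 2) f
      = ∑ k ∈ Finset.range (l / 2), kactTerm (lam - ((n : ℂ) - 1) / 2) (l - 2) k f := by
  rcases lt_or_ge l 2 with hl | hl
  · rw [Kact, if_neg (by omega), show l / 2 = 0 by omega, Finset.sum_range_zero]
  · rw [show (l : ℤ) - 2 = ((l - 2 : ℕ) : ℤ) by omega, Kact_natCast,
      show (l - 2) / 2 + 1 = l / 2 by omega]

theorem mul_gegenCoeff_sub_one_add_two (α : ℂ) {l j : ℕ} (h : 2 * j + 2 ≤ l) :
    ((j : ℂ) + 2) * ((j : ℂ) + 1) * gegenCoeff (α - 1) (l + 2) (j + 2)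
      = gegenCoeff (α + 1) (l - 2) j := by
  unfold gegenCoeff
  rw [show l + 2 - 2 * (j + 2) = l - 2 - 2 * j by omega, show l + 2 - (j + 2) = l - j by omega,
    show (l + 2 + 1) / 2 = (l - 1) / 2 + 2 by omega, show (l - 2 + 1) / 2 = (l - 1) / 2 by omega]
  have hprod : ∏ m ∈ Finset.Ico ((l - 1) / 2 + 2) (l - j), (α - 1 + (m : ℂ))
      = ∏ m ∈ Finset.Ico ((l - 1) / 2) (l - 2 - j), (α + 1 + (m : ℂ)) := by
    rw [Finset.prod_Ico_eq_prod_range, Finset.prod_Ico_eq_prod_range,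
      show l - j - ((l - 1) / 2 + 2) = l - 2 - j - (l - 1) / 2 by omega]
    refine Finset.prod_congr rfl fun i _ => ?_
    push_cast
    ring
  have hfac : ((j + 2).factorial : ℂ) = ((j : ℂ) + 2) * ((j : ℂ) + 1) * j.factorial := by
    push_cast [Nat.factorial_succ]
    ring
  have hj : (j : ℂ) + 2 ≠ 0 := by norm_cast
  rw [hprod, hfac, pow_add, neg_one_sq, mul_one]
  field_simp

theorem kactTerm_coordMulₗ_coordMulₗ_of_lt_two {p q : Fin n} (hp : (p : ℕ) < n - 1)
    (hq : (q : ℕ) < n - 1) (hpq : p ≠ q) (α : ℂ) (l : ℕ) {k : ℕ} (hk : k < 2)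
    (f : smoothFun n) : kactTerm α l k (coordMulₗ p (coordMulₗ q f)) = 0 := by
  rw [kactTerm, evalZero_lapPₗ_pow_coordMulₗ_coordMulₗ hp hq hpq
    ((commute_pdLastₗ_coordMulₗ hp).pow_left _) ((commute_pdLastₗ_coordMulₗ hq).pow_left _)]
  interval_cases k <;> simp

theorem kactTerm_coordMulₗ_coordMulₗ_add_two {p q : Fin n} (hp : (p : ℕ) < n - 1)
    (hq : (q : ℕ) < n - 1) (hpq : p ≠ q) (α : ℂ) {l j : ℕ} (h : 2 * j + 2 ≤ l) (f : smoothFun n) :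
    kactTerm (α - 1) (l + 2) (j + 2) (coordMulₗ p (coordMulₗ q f))
      = 4 * kactTerm (α + 1) (l - 2) j (pdₗ q (pdₗ p f)) := by
  rw [kactTerm, kactTerm, evalZero_lapPₗ_pow_coordMulₗ_coordMulₗ hp hq hpq
      ((commute_pdLastₗ_coordMulₗ hp).pow_left _) ((commute_pdLastₗ_coordMulₗ hq).pow_left _),
    show l + 2 - 2 * (j + 2) = l - 2 - 2 * j by omega, ← mul_gegenCoeff_sub_one_add_two α h]
  push_cast
  ring

end

theorem stmt13_general (n : ℕ) (lam : ℂ) (l : ℤ) (hl : 0 ≤ l)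
    (p q : Fin n) (hp : (p : ℕ) < n - 1) (hq : (q : ℕ) < n - 1)
    (hpq : p ≠ q) (φ : SchwartzMap (Fin n → ℝ) ℂ) :
    Kact n (lam - 1) (l + 2) (fun x => ((x p * x q : ℝ) : ℂ) * φ x)
      = 4 * Kact n (lam + 1) (l - 2) (pd q (pd p ⇑φ)) := by
  obtain ⟨t, rfl⟩ := Int.eq_ofNat_of_zero_le hl
  let f : smoothFun n := ⟨φ, φ.smooth ⊤⟩
  have hlhs : (fun x => ((x p * x q : ℝ) : ℂ) * φ x) = coordMulₗ p (coordMulₗ q f) := by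
    funext x
    show ((x p * x q : ℝ) : ℂ) * φ x = (x p : ℂ) * ((x q : ℂ) * φ x)
    push_cast
    ring
  have hα₁ : lam - 1 - ((n : ℂ) - 1) / 2 = lam - ((n : ℂ) - 1) / 2 - 1 := by ring
  have hα₂ : lam + 1 - ((n : ℂ) - 1) / 2 = lam - ((n : ℂ) - 1) / 2 + 1 := by ring
  rw [hlhs, show pd q (pd p ⇑φ) = pdₗ q (pdₗ p f) from rfl,
    show (t : ℤ) + 2 = ((t + 2 : ℕ) : ℤ) by push_cast; ring, Kact_natCast, Kact_natCast_sub_two,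
    hα₁, hα₂, show (t + 2) / 2 + 1 = t / 2 + 1 + 1 by omega]
  rw [Finset.sum_range_succ', Finset.sum_range_succ', zero_add,
    kactTerm_coordMulₗ_coordMulₗ_of_lt_two hp hq hpq _ _ one_lt_two,
    kactTerm_coordMulₗ_coordMulₗ_of_lt_two hp hq hpq _ _ two_pos, add_zero, add_zero,
    Finset.mul_sum]
  refine Finset.sum_congr rfl fun j hj => ?_
  exact kactTerm_coordMulₗ_coordMulₗ_add_two hp hq hpq _ (by simp at hj; omega) f

/-- `(x_p x_q)·𝒦_{λ−1,ν+1} = 4 ∂_p ∂_q 𝒦_{λ+1,ν−1}` as tempered distributions on ℝ^n,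
tested against an arbitrary Schwartz function `φ`; `(∂_p ∂_q T)(φ) = T(∂_q ∂_p φ)`. -/
theorem stmt13 (n : ℕ) (hn : 3 ≤ n) (lam nu : ℂ) (l : ℤ) (hl : 0 ≤ l)
    (hln : nu - lam = (l : ℂ)) (p q : Fin n) (hp : (p : ℕ) < n - 1) (hq : (q : ℕ) < n - 1)
    (hpq : p ≠ q) (φ : SchwartzMap (Fin n → ℝ) ℂ) :
    Kact n (lam - 1) (l + 2) (fun x => ((x p * x q : ℝ) : ℂ) * φ x)
      = 4 * Kact n (lam + 1) (l - 2) (pd q (pd p ⇑φ)) :=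
  stmt13_general n lam l hl p q hp hq hpq φ
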